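/- The minimizing subset in the TSS bound can be taken sorted: for fixed k, min over all k-element sub-multisets S of A of [TSS(A∖S)+TSS(B∪S)] equals the minimum of the same quantity over just the two choices S = (k largest elements of A) and S = (k smallest elements of A). -/

import Mathlib

/-- Total sum of squares (with the 1/2 factor) of a finite multiset of reals. -/
noncomputable def tss (X : Multiset ℝ) : ℝ :=
  (1 / 2) * (X.map (fun x => (x - X.sum / X.card) ^ 2)).sum

/-!
For `S ≤ A` with `S.card = k`, the quantity `tss (A - S) + tss (B + S)` depends on `S` only
through `s = S.sum`: it equals `C - ((ΣA - s)² / (|A| - k) + (ΣB + s)² / (|B| + k)) / 2`, a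
concave function of `s`, so on an interval it is minimal at an endpoint. In a sorted list, any
`k` elements sum to between the first `k` and the last `k`, and those two extreme choices are
themselves admissible.
-/

open Set

section SortedSums

variable {α : Type*} [AddCommMonoid α] [PartialOrder α] [IsOrderedAddMonoid α]

lemma List.sum_take_cons_le_sum_take {a : α} {l : List α} (ha : ∀ b ∈ l, a ≤ b) {n : ℕ}
    (hn : n ≤ l.length) : ((a :: l).take n).sum ≤ (l.take n).sum := by
  cases n with
  | zero => simp
  | succ n =>
    have hn' : n < l.length := hn
    rw [List.take_succ_cons, List.sum_cons, List.take_succ_eq_append_getElem hn',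
      List.sum_append, List.sum_singleton, add_comm]
    gcongr
    exact ha _ (l.getElem_mem hn')

lemma List.Sublist.sum_take_le_sum {s l : List α} (h : s.Sublist l) (hl : l.Pairwise (· ≤ ·)) :
    (l.take s.length).sum ≤ s.sum := by
  induction h with
  | slnil => simp
  | cons a h ih =>
    exact (List.sum_take_cons_le_sum_take (fun _ => List.rel_of_pairwise_cons hl)
      h.length_le).trans (ih hl.of_cons)
  | cons_cons a h ih =>
    simp only [List.length_cons, List.take_succ_cons, List.sum_cons]
    gcongr
    exact ih hl.of_cons

lemma List.Sublist.sum_le_sum_drop {s l : List α} (h : s.Sublist l) (hl : l.Pairwise (· ≤ ·)) :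
    s.sum ≤ (l.drop (l.length - s.length)).sum := by
  -- In `αᵒᵈ` the reversed list is sorted, and its first elements are the last ones of `l`.
  have := List.Sublist.sum_take_le_sum (α := αᵒᵈ) h.reverse (List.pairwise_reverse.mpr hl)
  erw [List.length_reverse, List.take_reverse, List.sum_reverse, List.sum_reverse] at this
  exact this

end SortedSums

lemma Multiset.sum_mem_Icc_of_le {α : Type*} [AddCommMonoid α] [LinearOrder α]
    [IsOrderedAddMonoid α] {S A : Multiset α} (h : S ≤ A) :
    S.sum ∈ Set.Icc ((A.sort (· ≤ ·)).take S.card).sum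
      ((A.sort (· ≤ ·)).drop (A.card - S.card)).sum := by
  have hsub : (S.sort (· ≤ ·)).Sublist (A.sort (· ≤ ·)) := by
    refine List.sublist_of_subperm_of_pairwise ?_ (S.pairwise_sort _) (A.pairwise_sort _)
    rw [← Multiset.coe_le, Multiset.sort_eq, Multiset.sort_eq]
    exact h
  have hsum : (S.sort (· ≤ ·)).sum = S.sum := by
    rw [← Multiset.sum_coe, Multiset.sort_eq]
  have low := hsub.sum_take_le_sum (A.pairwise_sort _)
  have high := hsub.sum_le_sum_drop (A.pairwise_sort _)
  rw [Multiset.length_sort, hsum] at low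
  rw [Multiset.length_sort, Multiset.length_sort, hsum] at high
  exact ⟨low, high⟩

lemma Multiset.coe_take_sort_le {α : Type*} [LinearOrder α] (A : Multiset α) (k : ℕ) :
    ↑((A.sort (· ≤ ·)).take k) ≤ A := by
  simpa only [Multiset.sort_eq] using
    Multiset.coe_le.mpr ((A.sort (· ≤ ·)).take_sublist k).subperm

lemma Multiset.coe_drop_sort_le {α : Type*} [LinearOrder α] (A : Multiset α) (k : ℕ) :
    ↑((A.sort (· ≤ ·)).drop k) ≤ A := by
  simpa only [Multiset.sort_eq] using
    Multiset.coe_le.mpr ((A.sort (· ≤ ·)).drop_sublist k).subperm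

lemma Multiset.sum_map_sub_sq (X : Multiset ℝ) (c : ℝ) :
    (X.map fun x => (x - c) ^ 2).sum = (X.map (· ^ 2)).sum - 2 * c * X.sum + X.card * c ^ 2 := by
  induction X using Multiset.induction with
  | empty => simp
  | cons a X ih =>
    simp only [Multiset.map_cons, Multiset.sum_cons, Multiset.card_cons, ih]
    push_cast
    ring

-- For `X = 0` both sides vanish, the right one through `0 / 0 = 0`.
lemma tss_eq (X : Multiset ℝ) :
    tss X = (1 / 2) * ((X.map (· ^ 2)).sum - X.sum ^ 2 / X.card) := by
  rcases eq_or_ne X 0 with rfl | hX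
  · simp [tss]
  have hcard : (X.card : ℝ) ≠ 0 := by simpa using hX
  rw [tss, Multiset.sum_map_sub_sq]
  field_simp
  ring

lemma tss_sub_add_tss_add {A S : Multiset ℝ} (B : Multiset ℝ) (h : S ≤ A) :
    tss (A - S) + tss (B + S) =
      (1 / 2) * ((A.map (· ^ 2)).sum + (B.map (· ^ 2)).sum)
        - (1 / 2) * ((A.sum - S.sum) ^ 2 / ((A.card : ℝ) - S.card)
          + (B.sum + S.sum) ^ 2 / ((B.card : ℝ) + S.card)) := by
  obtain ⟨T, rfl⟩ := Multiset.le_iff_exists_add.mp h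
  simp only [tss_eq, add_tsub_cancel_left, Multiset.map_add, Multiset.sum_add,
    Multiset.card_add, Nat.cast_add]
  ring

lemma convexOn_sub_sq_div (a c : ℝ) (hc : 0 ≤ c) :
    ConvexOn ℝ univ fun s : ℝ => (s - a) ^ 2 / c := by
  simpa [div_eq_inv_mul, sub_eq_add_neg, Function.comp_def] using
    ((even_two.convexOn_pow (𝕜 := ℝ)).translate_left (-a)).smul (inv_nonneg.mpr hc)

lemma concaveOn_const_sub_half_sq_div_add_sq_div (C a b c₁ c₂ : ℝ) (h₁ : 0 ≤ c₁)
    (h₂ : 0 ≤ c₂) :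
    ConcaveOn ℝ univ fun s => C - (1 / 2) * ((a - s) ^ 2 / c₁ + (b + s) ^ 2 / c₂) := by
  refine ((concaveOn_const C convex_univ).sub
    (((convexOn_sub_sq_div a _ h₁).add (convexOn_sub_sq_div (-b) _ h₂)).smul
      (by norm_num : (0 : ℝ) ≤ 1 / 2))).congr fun s _ => ?_
  simp only [Pi.sub_apply, Pi.add_apply, smul_eq_mul]
  ring

theorem tss_min_at_sorted_extremes_general (A B : Multiset ℝ) (k : ℕ)
    (hkn : k < A.card) :
    IsLeast {x : ℝ | ∃ S : Multiset ℝ, S ≤ A ∧ S.card = k ∧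
        x = tss (A - S) + tss (B + S)}
      (min
        (tss (A - ↑((A.sort (· ≤ ·)).take k))
          + tss (B + ↑((A.sort (· ≤ ·)).take k)))
        (tss (A - ↑((A.sort (· ≤ ·)).drop (A.card - k)))
          + tss (B + ↑((A.sort (· ≤ ·)).drop (A.card - k))))) := by
  set l := A.sort (· ≤ ·)
  set C := (1 / 2) * ((A.map (· ^ 2)).sum + (B.map (· ^ 2)).sum)
  set cost : ℝ → ℝ := fun s =>
    C - (1 / 2) * ((A.sum - s) ^ 2 / ((A.card : ℝ) - k) + (B.sum + s) ^ 2 / ((B.card : ℝ) + k))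
  have hcost : ∀ S ≤ A, S.card = k → tss (A - S) + tss (B + S) = cost S.sum :=
    fun S hS hk => by subst hk; exact tss_sub_add_tss_add B hS
  have hconcave : ConcaveOn ℝ univ cost :=
    concaveOn_const_sub_half_sq_div_add_sq_div _ _ _ _ _
      (sub_nonneg.mpr (mod_cast hkn.le)) (by positivity)
  have htake : ↑(l.take k) ≤ A ∧ (↑(l.take k) : Multiset ℝ).card = k :=
    ⟨A.coe_take_sort_le k, by simp [l, hkn.le]⟩
  have hdrop :
      ↑(l.drop (A.card - k)) ≤ A ∧ (↑(l.drop (A.card - k)) : Multiset ℝ).card = k :=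
    ⟨A.coe_drop_sort_le _, by
      simp only [Multiset.coe_card, List.length_drop, Multiset.length_sort, l]; omega⟩
  refine ⟨?_, ?_⟩
  · rcases min_choice (tss (A - ↑(l.take k)) + tss (B + ↑(l.take k)))
      (tss (A - ↑(l.drop (A.card - k))) + tss (B + ↑(l.drop (A.card - k)))) with h | h
    · exact ⟨_, htake.1, htake.2, h⟩
    · exact ⟨_, hdrop.1, hdrop.2, h⟩
  · rintro _ ⟨S, hSA, rfl, rfl⟩
    rw [hcost S hSA rfl, hcost _ htake.1 htake.2, hcost _ hdrop.1 hdrop.2,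
      Multiset.sum_coe, Multiset.sum_coe]
    exact hconcave.min_le_of_mem_Icc trivial trivial (Multiset.sum_mem_Icc_of_le hSA)

/-- For fixed `k`, the minimum of `TSS(A∖S)+TSS(B∪S)` over all `k`-element
sub-multisets `S` of `A` is attained at `S` being the `k` smallest or the `k`
largest elements of `A`. -/
theorem tss_min_at_sorted_extremes (A B : Multiset ℝ) (k : ℕ)
    (hk0 : 1 ≤ k) (hkn : k < A.card) :
    IsLeast {x : ℝ | ∃ S : Multiset ℝ, S ≤ A ∧ S.card = k ∧
        x = tss (A - S) + tss (B + S)}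
      (min
        (tss (A - ↑((A.sort (· ≤ ·)).take k))
          + tss (B + ↑((A.sort (· ≤ ·)).take k)))
        (tss (A - ↑((A.sort (· ≤ ·)).drop (A.card - k)))
          + tss (B + ↑((A.sort (· ≤ ·)).drop (A.card - k))))) :=
  tss_min_at_sorted_extremes_general A B k hkn
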